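/- Let n ≥ 1 be an integer, R = W(n+1), and let ε be a real number with 0 < ε < 1/2 and R ≥ 5. Define the complex number J = (n!/(2πi)) · ∫_{t=√(R²−ε²)}^{R} [exp(e^{t−iε} − 1)/(t−iε)^{n+1} − exp(e^{t+iε} − 1)/(t+iε)^{n+1}] dt. Then |J/E_n| ≤ exp(e^R·(cos ε − 1) − (R/2)·(1 − ε²)). -/

import Mathlib

/-- Principal branch of the Lambert W function on `[0, ∞)`: for `x ≥ 0`,
`lambertW x` is the unique `y ≥ 0` with `y * exp y = x`. -/
noncomputable def lambertW (x : ℝ) : ℝ := Function.invFun (fun y : ℝ => y * Real.exp y) x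

/-- `E n = n! * exp(e^R - 1) / (R^n * sqrt(2π(n+1)(R+1)))` with `R = W(n+1)`. -/
noncomputable def E (n : ℕ) : ℝ :=
  (Nat.factorial n : ℝ) * Real.exp (Real.exp (lambertW (n + 1)) - 1) /
    ((lambertW (n + 1)) ^ n * Real.sqrt (2 * Real.pi * (n + 1) * (lambertW (n + 1) + 1)))

/-!
On the segment `s ≤ t ≤ R`, with `s = √(R² - ε²)`, both points `t ± iε` have modulus at least `R`
and `|exp (e^(t ± iε) - 1)| = exp (cos ε · e^t - 1)`. Inserting the factor `e^t / e^s ≥ 1` turns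
this majorant into an exact derivative, so
`|J| ≤ n! · exp (cos ε · e^R - 1) / (π · cos ε · R^(n+1) · e^s)`.
Since `R e^R = n + 1`, the ratio with `E n` is `exp (e^R (cos ε - 1)) · √(2πRe^R(R+1)) / (π cos ε R e^s)`,
and the last factor is at most `exp (-R/2 · (1 - ε²))` because `s ≥ R (1 - ε²/2)` and
`2 (R + 1) ≤ π cos² ε · R` once `R ≥ 5` and `cos ε ≥ 7/8`.
-/

theorem lambertW_mul_exp {x : ℝ} (hx : 0 ≤ x) : lambertW x * Real.exp (lambertW x) = x := by
  have hsurj : ∃ y, y * Real.exp y = x := by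
    obtain ⟨y, -, hy⟩ := intermediate_value_Icc hx
      (continuous_id.mul Real.continuous_exp).continuousOn
      (show x ∈ Set.Icc (0 * Real.exp 0) (x * Real.exp x) from
        ⟨by simpa using hx, le_mul_of_one_le_right hx (Real.one_le_exp hx)⟩)
    exact ⟨y, hy⟩
  exact Function.invFun_eq hsurj

theorem E_eq (n : ℕ) :
    E n = (Nat.factorial n : ℝ) * Real.exp (Real.exp (lambertW (n + 1)) - 1) /
      (lambertW (n + 1) ^ n * Real.sqrt (2 * Real.pi *
        (lambertW (n + 1) * Real.exp (lambertW (n + 1))) * (lambertW (n + 1) + 1))) := by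
  rw [E, lambertW_mul_exp (by positivity)]

theorem norm_exp_exp_sub_one_div_pow_le {z : ℂ} {R : ℝ} (m : ℕ) (hR : 0 < R) (hz : R ≤ ‖z‖) :
    ‖Complex.exp (Complex.exp z - 1) / z ^ m‖ ≤
      Real.exp (Real.exp z.re * Real.cos z.im - 1) / R ^ m := by
  rw [norm_div, norm_pow, Complex.norm_exp, Complex.sub_re, Complex.exp_re, Complex.one_re]
  gcongr

theorem norm_integrand_le (n : ℕ) {R t ε : ℝ} (hR : 0 < R) (hRt : R ^ 2 ≤ t ^ 2 + ε ^ 2) :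
    ‖Complex.exp (Complex.exp ((t : ℂ) - (ε : ℂ) * Complex.I) - 1) /
          ((t : ℂ) - (ε : ℂ) * Complex.I) ^ (n + 1) -
        Complex.exp (Complex.exp ((t : ℂ) + (ε : ℂ) * Complex.I) - 1) /
          ((t : ℂ) + (ε : ℂ) * Complex.I) ^ (n + 1)‖ ≤
      2 * Real.exp (Real.cos ε * Real.exp t - 1) / R ^ (n + 1) := by
  have hnorm : ∀ δ : ℝ, ‖(t : ℂ) + (δ : ℂ) * Complex.I‖ = Real.sqrt (t ^ 2 + δ ^ 2) := by
    intro δ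
    rw [Complex.norm_add_mul_I, sq, sq]
  have hbound : ∀ δ : ℝ, δ ^ 2 = ε ^ 2 →
      ‖Complex.exp (Complex.exp ((t : ℂ) + (δ : ℂ) * Complex.I) - 1) /
          ((t : ℂ) + (δ : ℂ) * Complex.I) ^ (n + 1)‖ ≤
        Real.exp (Real.cos ε * Real.exp t - 1) / R ^ (n + 1) := by
    intro δ hδ
    have hz : R ≤ ‖(t : ℂ) + (δ : ℂ) * Complex.I‖ := by
      rw [hnorm, hδ]
      exact Real.le_sqrt_of_sq_le hRt
    have hcos : Real.cos δ = Real.cos ε := by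
      rcases sq_eq_sq_iff_eq_or_eq_neg.mp hδ with rfl | rfl
      · rfl
      · exact Real.cos_neg ε
    convert norm_exp_exp_sub_one_div_pow_le (n + 1) hR hz using 4
    simp [hcos, mul_comm]
  have hminus := hbound (-ε) (neg_sq ε)
  push_cast at hminus
  rw [neg_mul, ← sub_eq_add_neg] at hminus
  calc _ ≤ _ := norm_sub_le _ _
    _ ≤ _ := add_le_add hminus (hbound ε rfl)
    _ = _ := by ring

theorem integral_exp_mul_exp_const_mul_exp {c : ℝ} (hc : c ≠ 0) (a b : ℝ) :
    ∫ t in a..b, Real.exp t * Real.exp (c * Real.exp t - 1) =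
      (Real.exp (c * Real.exp b - 1) - Real.exp (c * Real.exp a - 1)) / c := by
  have hderiv : ∀ x : ℝ, HasDerivAt (fun t => Real.exp (c * Real.exp t - 1) / c)
      (Real.exp x * Real.exp (c * Real.exp x - 1)) x := by
    intro x
    refine ((((Real.hasDerivAt_exp x).const_mul c).sub_const 1).exp.div_const c).congr_deriv ?_
    field_simp
  rw [intervalIntegral.integral_eq_sub_of_hasDerivAt (fun x _ => hderiv x)
    ((by fun_prop : Continuous _).intervalIntegrable _ _), sub_div]

theorem integral_exp_mul_exp_const_mul_exp_le {c a b : ℝ} (hc : 0 < c) :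
    ∫ t in a..b, Real.exp t * Real.exp (c * Real.exp t - 1) ≤
      Real.exp (c * Real.exp b - 1) / c := by
  rw [integral_exp_mul_exp_const_mul_exp hc.ne']
  gcongr
  exact sub_le_self _ (Real.exp_nonneg _)

theorem norm_integral_integrand_le (n : ℕ) {R s ε : ℝ} (hR : 0 < R) (hs : 0 ≤ s) (hsR : s ≤ R)
    (hRs : R ^ 2 ≤ s ^ 2 + ε ^ 2) (hc : 0 < Real.cos ε) :
    ‖∫ t in s..R,
        (Complex.exp (Complex.exp ((t : ℂ) - (ε : ℂ) * Complex.I) - 1) /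
            ((t : ℂ) - (ε : ℂ) * Complex.I) ^ (n + 1) -
          Complex.exp (Complex.exp ((t : ℂ) + (ε : ℂ) * Complex.I) - 1) /
            ((t : ℂ) + (ε : ℂ) * Complex.I) ^ (n + 1))‖ ≤
      2 * Real.exp (Real.cos ε * Real.exp R - 1) / (Real.cos ε * R ^ (n + 1) * Real.exp s) := by
  set c := Real.cos ε
  have hpointwise : ∀ t ∈ Set.Ioc s R,
      ‖Complex.exp (Complex.exp ((t : ℂ) - (ε : ℂ) * Complex.I) - 1) /
            ((t : ℂ) - (ε : ℂ) * Complex.I) ^ (n + 1) -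
          Complex.exp (Complex.exp ((t : ℂ) + (ε : ℂ) * Complex.I) - 1) /
            ((t : ℂ) + (ε : ℂ) * Complex.I) ^ (n + 1)‖ ≤
        2 / (R ^ (n + 1) * Real.exp s) * (Real.exp t * Real.exp (c * Real.exp t - 1)) := by
    rintro t ⟨hst, -⟩
    calc _ ≤ 2 * Real.exp (c * Real.exp t - 1) / R ^ (n + 1) :=
          norm_integrand_le n hR (by nlinarith)
      _ = 2 / (R ^ (n + 1) * Real.exp s) * (Real.exp s * Real.exp (c * Real.exp t - 1)) := by
          field_simp
      _ ≤ _ := by gcongr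
  calc _ ≤ ∫ t in s..R, 2 / (R ^ (n + 1) * Real.exp s) *
          (Real.exp t * Real.exp (c * Real.exp t - 1)) :=
        intervalIntegral.norm_integral_le_of_norm_le hsR (MeasureTheory.ae_of_all _ hpointwise)
          ((by fun_prop : Continuous _).intervalIntegrable _ _)
    _ ≤ 2 / (R ^ (n + 1) * Real.exp s) * (Real.exp (c * Real.exp R - 1) / c) := by
        rw [intervalIntegral.integral_const_mul]
        gcongr
        exact integral_exp_mul_exp_const_mul_exp_le hc
    _ = _ := by field_simp

theorem mul_one_sub_sq_div_two_le_sqrt {R ε : ℝ} (hR : 0 ≤ R) (hR2 : 2 ≤ R ^ 2) :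
    R * (1 - ε ^ 2 / 2) ≤ Real.sqrt (R ^ 2 - ε ^ 2) := by
  rcases le_or_gt (R * (1 - ε ^ 2 / 2)) 0 with hneg | hpos
  · exact hneg.trans (Real.sqrt_nonneg _)
  have hε2 : ε ^ 2 < 2 := by nlinarith
  apply Real.le_sqrt_of_sq_le
  nlinarith [mul_nonneg (sq_nonneg ε) (sub_nonneg.mpr hR2), mul_nonneg (sq_nonneg ε)
    (mul_nonneg (sq_nonneg R) (sq_nonneg ε))]

theorem sqrt_two_pi_mul_le {R c : ℝ} (hR : 5 ≤ R) (hc : 7 / 8 ≤ c) :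
    Real.sqrt (2 * Real.pi * (R * Real.exp R) * (R + 1)) ≤
      Real.pi * c * R * Real.exp (R / 2) := by
  have hπ := Real.pi_gt_d2
  have hpic : 2 * (R + 1) ≤ Real.pi * c ^ 2 * R := by
    have : (49 / 64 : ℝ) ≤ c ^ 2 := by nlinarith
    nlinarith [mul_le_mul hπ.le this (by norm_num) Real.pi_pos.le]
  rw [Real.sqrt_le_left (by positivity), mul_pow, sq (Real.exp _), ← Real.exp_add, add_halves]
  have := Real.exp_pos R
  calc 2 * Real.pi * (R * Real.exp R) * (R + 1)
      = Real.pi * R * Real.exp R * (2 * (R + 1)) := by ring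
    _ ≤ Real.pi * R * Real.exp R * (Real.pi * c ^ 2 * R) := by gcongr
    _ = _ := by ring

theorem factorial_div_two_pi_mul_le (n : ℕ) {R c s ε : ℝ} (hR : 5 ≤ R) (hc : 7 / 8 ≤ c)
    (hs : R * (1 - ε ^ 2 / 2) ≤ s) :
    (Nat.factorial n : ℝ) / (2 * Real.pi) *
        (2 * Real.exp (c * Real.exp R - 1) / (c * R ^ (n + 1) * Real.exp s)) ≤
      Real.exp (Real.exp R * (c - 1) - R / 2 * (1 - ε ^ 2)) *
        ((Nat.factorial n : ℝ) * Real.exp (Real.exp R - 1) /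
          (R ^ n * Real.sqrt (2 * Real.pi * (R * Real.exp R) * (R + 1)))) := by
  set Q := Real.sqrt (2 * Real.pi * (R * Real.exp R) * (R + 1))
  set D := Real.exp (R / 2 * (1 - ε ^ 2))
  set K := (Nat.factorial n : ℝ) * Real.exp (Real.exp R - 1) * Real.exp (Real.exp R * (c - 1)) / R ^ n
  have hR0 : 0 < R := by linarith
  have hc0 : 0 < c := by linarith
  have hQ : 0 < Q := Real.sqrt_pos.mpr (by positivity)
  have hDQ : D * Q ≤ Real.pi * c * R * Real.exp s := by
    calc D * Q ≤ D * (Real.pi * c * R * Real.exp (R / 2)) := by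
          gcongr; exact sqrt_two_pi_mul_le hR hc
      _ = Real.pi * c * R * Real.exp (R / 2 * (1 - ε ^ 2) + R / 2) := by
          rw [Real.exp_add]; ring
      _ ≤ Real.pi * c * R * Real.exp s := by gcongr; linarith
  have hsplit : Real.exp (c * Real.exp R - 1) =
      Real.exp (Real.exp R - 1) * Real.exp (Real.exp R * (c - 1)) := by
    rw [← Real.exp_add]; ring_nf
  calc _ = K / (Real.pi * c * R * Real.exp s) := by
        rw [hsplit]; simp only [K]; field_simp; ring
    _ ≤ K / (D * Q) := div_le_div_of_nonneg_left (by positivity) (by positivity) hDQ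
    _ = _ := by
        rw [Real.exp_sub]; simp only [K, D]; field_simp

theorem stmt_18_general (n : ℕ) (ε : ℝ) (hε0 : 0 < ε) (hε : ε < 1 / 2)
    (R : ℝ) (hR : R = lambertW (n + 1)) (hR5 : 5 ≤ R)
    (J : ℂ)
    (hJ : J = (Nat.factorial n : ℂ) / (2 * Real.pi * Complex.I) *
        ∫ t in Real.sqrt (R ^ 2 - ε ^ 2)..R,
          (Complex.exp (Complex.exp ((t : ℂ) - (ε : ℂ) * Complex.I) - 1) /
              ((t : ℂ) - (ε : ℂ) * Complex.I) ^ (n + 1) -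
            Complex.exp (Complex.exp ((t : ℂ) + (ε : ℂ) * Complex.I) - 1) /
              ((t : ℂ) + (ε : ℂ) * Complex.I) ^ (n + 1))) :
    ‖J / (E n : ℂ)‖ ≤
      Real.exp (Real.exp R * (Real.cos ε - 1) - R / 2 * (1 - ε ^ 2)) := by
  set s := Real.sqrt (R ^ 2 - ε ^ 2)
  have hR0 : 0 < R := by linarith
  have hRs : R ^ 2 ≤ s ^ 2 + ε ^ 2 := by rw [Real.sq_sqrt (by nlinarith)]; linarith
  have hsR : s ≤ R := Real.sqrt_le_iff.mpr ⟨hR0.le, by nlinarith⟩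
  have hcos : 7 / 8 ≤ Real.cos ε := by nlinarith [Real.one_sub_sq_div_two_le_cos (x := ε)]
  have hJnorm : ‖J‖ ≤ (Nat.factorial n : ℝ) / (2 * Real.pi) *
      (2 * Real.exp (Real.cos ε * Real.exp R - 1) / (Real.cos ε * R ^ (n + 1) * Real.exp s)) := by
    rw [hJ, norm_mul, norm_div, Complex.norm_natCast, norm_mul, norm_mul, Complex.norm_I,
      Complex.norm_real, Real.norm_of_nonneg Real.pi_pos.le, Complex.norm_two, mul_one]
    gcongr
    exact norm_integral_integrand_le n hR0 (Real.sqrt_nonneg _) hsR hRs (by linarith)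
  have hE : E n = (Nat.factorial n : ℝ) * Real.exp (Real.exp R - 1) /
      (R ^ n * Real.sqrt (2 * Real.pi * (R * Real.exp R) * (R + 1))) := hR ▸ E_eq n
  have hEpos : 0 < E n := by rw [hE]; positivity
  rw [norm_div, Complex.norm_real, Real.norm_of_nonneg hEpos.le, div_le_iff₀ hEpos, hE]
  exact hJnorm.trans (factorial_div_two_pi_mul_le n hR5 hcos
    (mul_one_sub_sq_div_two_le_sqrt hR0.le (by nlinarith)))

theorem stmt_18 (n : ℕ) (hn : 1 ≤ n) (ε : ℝ) (hε0 : 0 < ε) (hε : ε < 1 / 2)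
    (R : ℝ) (hR : R = lambertW (n + 1)) (hR5 : 5 ≤ R)
    (J : ℂ)
    (hJ : J = (Nat.factorial n : ℂ) / (2 * Real.pi * Complex.I) *
        ∫ t in Real.sqrt (R ^ 2 - ε ^ 2)..R,
          (Complex.exp (Complex.exp ((t : ℂ) - (ε : ℂ) * Complex.I) - 1) /
              ((t : ℂ) - (ε : ℂ) * Complex.I) ^ (n + 1) -
            Complex.exp (Complex.exp ((t : ℂ) + (ε : ℂ) * Complex.I) - 1) /
              ((t : ℂ) + (ε : ℂ) * Complex.I) ^ (n + 1))) :
    ‖J / (E n : ℂ)‖ ≤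
      Real.exp (Real.exp R * (Real.cos ε - 1) - R / 2 * (1 - ε ^ 2)) :=
  stmt_18_general n ε hε0 hε R hR hR5 J hJ
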